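/- If a mesh pattern (π, R) has no enclosed diagonals, then (π, R) is coincident with the classical pattern π: a permutation contains (π, R) if and only if it contains π. -/

import Mathlib

/-- `σ` contains the classical pattern `π`. -/
def PatternContains {k n : ℕ} (π : Equiv.Perm (Fin k)) (σ : Equiv.Perm (Fin n)) : Prop :=
  ∃ f : Fin k → Fin n, StrictMono f ∧ ∀ a b : Fin k, σ (f a) < σ (f b) ↔ π a < π b

/-- `σ` contains the mesh pattern `(π, R)`: some occurrence of `π` in `σ` leaves all
regions corresponding to squares of `R` free of points of `G(σ)`.  Squares are indexed
by lower-left corner `(p.1, p.2) ∈ [0,k] × [0,k]`, with the usual boundary conventions. -/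
def MeshContains {k n : ℕ} (π : Equiv.Perm (Fin k))
    (R : Set (Fin (k + 1) × Fin (k + 1))) (σ : Equiv.Perm (Fin n)) : Prop :=
  ∃ f : Fin k → Fin n, StrictMono f ∧ (∀ a b : Fin k, σ (f a) < σ (f b) ↔ π a < π b) ∧
    ∀ p ∈ R, ¬ ∃ z : Fin n,
      (∀ c : Fin k, c.val < p.1.val → f c < z) ∧
      (∀ c : Fin k, p.1.val ≤ c.val → z < f c) ∧
      (∀ c : Fin k, (π c).val < p.2.val → σ (f c) < σ z) ∧
      (∀ c : Fin k, p.2.val ≤ (π c).val → σ z < σ (f c))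

/-- `(a, b)` is a point of `G(π)` (1-indexed: `π(a) = b`). -/
def HasPoint {k : ℕ} (π : Equiv.Perm (Fin k)) (a b : ℤ) : Prop :=
  ∃ c : Fin k, (c.val : ℤ) + 1 = a ∧ ((π c).val : ℤ) + 1 = b

/-- The square with lower-left corner `(a, b)` is a shaded square of the mesh `R`. -/
def SquareInMesh {k : ℕ} (R : Set (Fin (k + 1) × Fin (k + 1))) (a b : ℤ) : Prop :=
  ∃ q ∈ R, (q.1.val : ℤ) = a ∧ (q.2.val : ℤ) = b

/-- `((i,j), ε, h)` is an enclosed diagonal of the mesh pattern `(π, R)`. -/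
def IsEnclosedDiagonal {k : ℕ} (π : Equiv.Perm (Fin k)) (R : Set (Fin (k + 1) × Fin (k + 1)))
    (i j ε : ℤ) (h : ℕ) : Prop :=
  (ε = 1 ∨ ε = -1) ∧ 1 ≤ h ∧
  (∀ x : ℕ, 1 ≤ x → x < h → HasPoint π (i + (x : ℤ)) (j + (x : ℤ) * ε)) ∧
  ¬ HasPoint π i j ∧ ¬ HasPoint π (i + (h : ℤ)) (j + (h : ℤ) * ε) ∧
  (∀ x : ℕ, x < h → SquareInMesh R (i + (x : ℤ)) (j + (x : ℤ) * ε))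

def HasEnclosedDiagonal {k : ℕ} (π : Equiv.Perm (Fin k))
    (R : Set (Fin (k + 1) × Fin (k + 1))) : Prop :=
  ∃ i j ε h, IsEnclosedDiagonal π R i j ε h

/-- The mesh `R` is superfluous for `π`: the mesh pattern `(π, R)` is coincident with
the classical pattern `π` (contained in exactly the same permutations, equivalently
avoided by exactly the same permutations). -/
def Superfluous {k : ℕ} (π : Equiv.Perm (Fin k)) (R : Set (Fin (k + 1) × Fin (k + 1))) : Prop :=
  ∀ (n : ℕ) (σ : Equiv.Perm (Fin n)), MeshContains π R σ ↔ PatternContains π σ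

/-- The number of superfluous meshes for `π`. -/
noncomputable def supMesh {k : ℕ} (π : Equiv.Perm (Fin k)) : ℕ :=
  Nat.card {R : Set (Fin (k + 1) × Fin (k + 1)) // Superfluous π R}

/-- The type of all permutations (of all sizes). -/
def Perms : Type := Σ n : ℕ, Equiv.Perm (Fin n)

def PContains (p q : Perms) : Prop := PatternContains p.2 q.2

/-- Permutations avoiding every pattern in `P`. -/
def Av (P : Set Perms) : Set Perms := {σ | ∀ p ∈ P, ¬ PContains p σ}

/-- Permutations containing some pattern in `P`. -/
def ContSet (P : Set Perms) : Set Perms := {σ | ∃ p ∈ P, PContains p σ}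

/-- Permutations (of all sizes) avoiding the mesh pattern `(π, R)`. -/
def AvMesh {k : ℕ} (π : Equiv.Perm (Fin k)) (R : Set (Fin (k + 1) × Fin (k + 1))) :
    Set Perms :=
  {σ | ¬ MeshContains π R σ.2}

def permOnNat {k : ℕ} (π : Equiv.Perm (Fin k)) (a : ℕ) : ℕ :=
  if h : a < k then (π ⟨a, h⟩).val else a

def liftVal (j w : ℕ) : ℕ := if w < j then w else w + 1

/-- (0-indexed) values of the permutation obtained from `π` by inserting the value
`j + 1/2` between positions `i` and `i+1` (1-indexed) and rescaling. -/
def insertVal {k : ℕ} (π : Equiv.Perm (Fin k)) (i j p : ℕ) : ℕ :=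
  if p < i then liftVal j (permOnNat π p)
  else if p = i then j
  else liftVal j (permOnNat π (p - 1))

/-- The boxed mesh `[1, k-1] × [1, k-1]`. -/
def boxMesh (k : ℕ) : Set (Fin (k + 1) × Fin (k + 1)) :=
  {q | 1 ≤ q.1.val ∧ q.1.val ≤ k - 1 ∧ 1 ≤ q.2.val ∧ q.2.val ≤ k - 1}

/-- The set of squares of the diagonal `((i,j), ε, h)`. -/
def DiagSquares {k : ℕ} (i j ε : ℤ) (h : ℕ) : Set (Fin (k + 1) × Fin (k + 1)) :=
  {q | ∃ x : ℕ, x < h ∧ (q.1.val : ℤ) = i + (x : ℤ) ∧ (q.2.val : ℤ) = j + (x : ℤ) * ε}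

/-!
Among the occurrences of `π` in `σ`, take one maximising `occurrenceRank`. If a shaded region
contained a point `z` of `σ`, the occurrence could be improved. If the lower-left corner of the
square is a point of `π`, that point moves up-right onto `z`. Otherwise, since there is no
enclosed diagonal, the corners further up-right along the diagonal of the square are points of
`π` up to the first unshaded square; sliding this run one step down-left, its first point onto
`z`, lowers its top point, whose upper-right square is unshaded, and moves no other point with
an unshaded upper-right square.
-/

section Occurrences

variable {k n : ℕ} (π : Equiv.Perm (Fin k)) (σ : Equiv.Perm (Fin n))

def IsOccurrence (f : Fin k → Fin n) : Prop :=
  StrictMono f ∧ ∀ a b : Fin k, σ (f a) < σ (f b) ↔ π a < π b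

/-- The condition inside `MeshContains`: `z` lies in the region of the square `(a, b)`. -/
def InRegion (f : Fin k → Fin n) (a b : ℕ) (z : Fin n) : Prop :=
  (∀ c : Fin k, c.val < a → f c < z) ∧ (∀ c : Fin k, a ≤ c.val → z < f c) ∧
    (∀ c : Fin k, (π c).val < b → σ (f c) < σ z) ∧
    (∀ c : Fin k, b ≤ (π c).val → σ z < σ (f c))

variable {π σ}

lemma IsOccurrence.of_lt_imp {f : Fin k → Fin n} (hmono : StrictMono f)
    (hval : ∀ u v : Fin k, π u < π v → σ (f u) < σ (f v)) : IsOccurrence π σ f := by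
  refine ⟨hmono, fun u v => ⟨fun h => ?_, hval u v⟩⟩
  rcases lt_trichotomy (π u) (π v) with hlt | heq | hgt
  · exact hlt
  · rw [π.injective heq] at h
    exact absurd h (lt_irrefl _)
  · exact absurd (hval v u hgt) h.not_gt

/-- Inside an interval of `π` (positions `[s, s+m)` mapped onto values `[t, t+m)`), an
occurrence may be replaced by any occurrence of that interval lying in the same box. -/
lemma IsOccurrence.replace_interval {g g' : Fin k → Fin n} (hg : IsOccurrence π σ g)
    {s t m : ℕ}
    (hI : ∀ c : Fin k, c.val ∈ Set.Ico s (s + m) ↔ (π c).val ∈ Set.Ico t (t + m))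
    (hout : ∀ c : Fin k, c.val ∉ Set.Ico s (s + m) → g' c = g c)
    (hleft : ∀ c d : Fin k, c.val < s → d.val ∈ Set.Ico s (s + m) → g c < g' d)
    (hright : ∀ c d : Fin k, s + m ≤ c.val → d.val ∈ Set.Ico s (s + m) → g' d < g c)
    (hbelow : ∀ c d : Fin k, (π c).val < t → d.val ∈ Set.Ico s (s + m) →
      σ (g c) < σ (g' d))
    (habove : ∀ c d : Fin k, t + m ≤ (π c).val → d.val ∈ Set.Ico s (s + m) →
      σ (g' d) < σ (g c))
    (hmono : ∀ u v : Fin k, u.val ∈ Set.Ico s (s + m) → v.val ∈ Set.Ico s (s + m) →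
      u < v → g' u < g' v)
    (hval : ∀ u v : Fin k, u.val ∈ Set.Ico s (s + m) → v.val ∈ Set.Ico s (s + m) →
      π u < π v → σ (g' u) < σ (g' v)) :
    IsOccurrence π σ g' := by
  refine IsOccurrence.of_lt_imp (fun u v huv => ?_) (fun u v huv => ?_)
  all_goals
    have hu' := hI u
    have hv' := hI v
    by_cases hu : u.val ∈ Set.Ico s (s + m) <;> by_cases hv : v.val ∈ Set.Ico s (s + m) <;>
      simp only [Set.mem_Ico] at hu hv hu' hv'
  · exact hmono u v hu hv huv
  · rw [hout v hv]; exact hright v u (by omega) hu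
  · rw [hout u hu]; exact hleft u v (by omega) hv
  · rw [hout u hu, hout v hv]; exact hg.1 huv
  · exact hval u v hu hv huv
  · rw [hout v hv]; exact habove v u (by omega) hu
  · rw [hout u hu]; exact hbelow u v (by omega) hv
  · rw [hout u hu, hout v hv]; exact (hg.2 u v).2 huv

lemma IsOccurrence.update_of_inRegion {g : Fin k → Fin n} (hg : IsOccurrence π σ g)
    {a b : ℕ} {z : Fin n} (hz : InRegion π σ g a b z) {c₀ : Fin k} (ha : c₀.val + 1 = a)
    (hb : (π c₀).val + 1 = b) : IsOccurrence π σ (Function.update g c₀ z) := by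
  have hsingle : ∀ c : Fin k, c.val ∈ Set.Ico c₀.val (c₀.val + 1) ↔ c = c₀ := by
    intro c
    rw [Set.mem_Ico, Fin.ext_iff]
    omega
  refine hg.replace_interval (t := (π c₀).val) (m := 1) (fun c => ?_)
    (fun c hc => Function.update_of_ne ((hsingle c).not.1 hc) _ _)
    ?_ ?_ ?_ ?_ ?_ ?_
  · rw [hsingle, Set.mem_Ico, ← π.injective.eq_iff, Fin.ext_iff]
    omega
  all_goals intro c d; simp only [hsingle]
  · rintro hc rfl; rw [Function.update_self]; exact hz.1 c (by omega)
  · rintro hc rfl; rw [Function.update_self]; exact hz.2.1 c (by omega)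
  · rintro hc rfl; rw [Function.update_self]; exact hz.2.2.1 c (by omega)
  · rintro hc rfl; rw [Function.update_self]; exact hz.2.2.2 c (by omega)
  · rintro rfl rfl h; exact absurd h (lt_irrefl _)
  · rintro rfl rfl h; exact absurd h (lt_irrefl _)

end Occurrences

section DiagonalShift

variable {k n : ℕ} {π : Equiv.Perm (Fin k)} {σ : Equiv.Perm (Fin n)}

/-- Slides the points at positions `[a, a+m)` one step down along their diagonal: the first
one moves to `z`, each later one to the place of its predecessor. -/
def diagonalShift (g : Fin k → Fin n) (z : Fin n) (a m : ℕ) (c : Fin k) : Fin n :=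
  if c.val ∈ Set.Ico a (a + m) then
    (if c.val = a then z else g ⟨c.val - 1, (Nat.sub_le _ _).trans_lt c.isLt⟩)
  else g c

variable {g : Fin k → Fin n} {z : Fin n} {a b m : ℕ}

lemma diagonalShift_of_notMem {c : Fin k} (hc : c.val ∉ Set.Ico a (a + m)) :
    diagonalShift g z a m c = g c :=
  if_neg hc

lemma diagonalShift_of_lt {c : Fin k} (hc : c.val ∈ Set.Ico a (a + m)) (ha : a < c.val) :
    diagonalShift g z a m c = g ⟨c.val - 1, (Nat.sub_le _ _).trans_lt c.isLt⟩ := by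
  rw [diagonalShift, if_pos hc, if_neg ha.ne']

variable (hg : IsOccurrence π σ g) (hz : InRegion π σ g a b z)
  (hdiag : ∀ c : Fin k, c.val ∈ Set.Ico a (a + m) → (π c).val + a = c.val + b)
include hg hz hdiag

lemma diagonalShift_mem_box {d : Fin k} (hd : d.val ∈ Set.Ico a (a + m)) :
    z ≤ diagonalShift g z a m d ∧ diagonalShift g z a m d < g d ∧
      σ z ≤ σ (diagonalShift g z a m d) ∧ σ (diagonalShift g z a m d) < σ (g d) := by
  have hπd := hdiag d hd
  rw [Set.mem_Ico] at hd
  rcases hd.1.eq_or_lt with had | had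
  · rw [diagonalShift, if_pos (Set.mem_Ico.2 hd), if_pos had.symm]
    exact ⟨le_rfl, hz.2.1 d (by omega), le_rfl, hz.2.2.2 d (by omega)⟩
  · have hπd' := hdiag ⟨d.val - 1, (Nat.sub_le _ _).trans_lt d.isLt⟩
      (Set.mem_Ico.2 ⟨by dsimp only; omega, by dsimp only; omega⟩)
    dsimp only at hπd'
    rw [diagonalShift_of_lt (Set.mem_Ico.2 hd) had]
    exact ⟨(hz.2.1 _ (by dsimp only; omega)).le, hg.1 (Fin.lt_def.2 (by dsimp only; omega)),
      (hz.2.2.2 _ (by omega)).le, (hg.2 _ _).2 (Fin.lt_def.2 (by omega))⟩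

lemma isOccurrence_diagonalShift
    (hI : ∀ c : Fin k, c.val ∈ Set.Ico a (a + m) ↔ (π c).val ∈ Set.Ico b (b + m)) :
    IsOccurrence π σ (diagonalShift g z a m) := by
  have hbox := fun d => diagonalShift_mem_box (m := m) hg hz hdiag (d := d)
  have hpred : ∀ u v : Fin k, u.val ∈ Set.Ico a (a + m) → v.val ∈ Set.Ico a (a + m) →
      u < v → g u ≤ diagonalShift g z a m v ∧ σ (g u) ≤ σ (diagonalShift g z a m v) := by
    intro u v hu hv huv
    have hπu := hdiag u hu
    rw [diagonalShift_of_lt hv (by rw [Set.mem_Ico] at hu; omega)]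
    rw [Set.mem_Ico] at hu hv
    have hπv' := hdiag ⟨v.val - 1, (Nat.sub_le _ _).trans_lt v.isLt⟩
      (Set.mem_Ico.2 ⟨by dsimp only; omega, by dsimp only; omega⟩)
    dsimp only at hπv'
    exact ⟨hg.1.monotone (Fin.le_def.2 (by dsimp only; omega)),
      not_lt.1 ((hg.2 _ _).1.mt (by rw [Fin.lt_def]; omega))⟩
  refine hg.replace_interval hI (fun c hc => diagonalShift_of_notMem hc)
    (fun c d hc hd => (hz.1 c hc).trans_le (hbox d hd).1)
    (fun c d hc hd => (hbox d hd).2.1.trans (hg.1 (by rw [Set.mem_Ico] at hd; omega)))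
    (fun c d hc hd => (hz.2.2.1 c hc).trans_le (hbox d hd).2.2.1)
    (fun c d hc hd => (hbox d hd).2.2.2.trans ((hg.2 _ _).2 ?_))
    (fun u v hu hv huv => (hbox u hu).2.1.trans_le (hpred u v hu hv huv).1)
    (fun u v hu hv huv => (hbox u hu).2.2.2.trans_le (hpred u v hu hv ?_).2)
  · have := hdiag d hd; rw [Set.mem_Ico] at hd; omega
  have := hdiag u hu; have := hdiag v hv; rw [Fin.lt_def] at huv ⊢; omega

end DiagonalShift

section EnclosedDiagonals

variable {k : ℕ} {π : Equiv.Perm (Fin k)} {R : Set (Fin (k + 1) × Fin (k + 1))}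

lemma exists_diagonal_run (hnd : ¬ HasEnclosedDiagonal π R) {a b : ℕ}
    (hsq : SquareInMesh R a b) (hpt : ¬ HasPoint π a b) :
    ∃ m, 1 ≤ m ∧ (∀ t : ℕ, 1 ≤ t → t ≤ m → HasPoint π (a + t) (b + t)) ∧
      ¬ SquareInMesh R (a + m) (b + m) := by
  have hex : ∃ t : ℕ, ¬ SquareInMesh R (a + t) (b + t) :=
    ⟨k + 1, fun ⟨q, _, hq, _⟩ => by have := q.1.isLt; omega⟩
  classical
  refine ⟨Nat.find hex, Nat.one_le_iff_ne_zero.2 fun h0 => Nat.find_spec hex ?_, ?_,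
    Nat.find_spec hex⟩
  · simpa [h0] using hsq
  intro t
  induction t using Nat.strong_induction_on with
  | _ t ih =>
    intro ht htm
    by_contra hno
    refine hnd ⟨a, b, 1, t, Or.inl rfl, ht, fun x hx hxt => ?_, hpt, by simpa using hno,
      fun x hxt => ?_⟩
    · simpa using ih x hxt hx (by omega)
    · simpa using not_not.1 (Nat.find_min hex (lt_of_lt_of_le hxt htm))

lemma mem_Ico_iff_of_diagonal {a b m : ℕ}
    (hpts : ∀ t : ℕ, 1 ≤ t → t ≤ m → HasPoint π (a + t) (b + t)) (c : Fin k) :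
    c.val ∈ Set.Ico a (a + m) ↔ (π c).val ∈ Set.Ico b (b + m) := by
  simp only [Set.mem_Ico]
  constructor
  · intro hc
    obtain ⟨d, hd, hπd⟩ := hpts (c.val - a + 1) (by omega) (by omega)
    obtain rfl : d = c := Fin.ext (by omega)
    omega
  · intro hc
    obtain ⟨d, hd, hπd⟩ := hpts ((π c).val - b + 1) (by omega) (by omega)
    obtain rfl : d = c := π.injective (Fin.ext (by omega))
    omega

lemma diagonal_of_hasPoint {a b m : ℕ}
    (hpts : ∀ t : ℕ, 1 ≤ t → t ≤ m → HasPoint π (a + t) (b + t)) (c : Fin k)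
    (hc : c.val ∈ Set.Ico a (a + m)) : (π c).val + a = c.val + b := by
  rw [Set.mem_Ico] at hc
  obtain ⟨d, hd, hπd⟩ := hpts (c.val - a + 1) (by omega) (by omega)
  obtain rfl : d = c := Fin.ext (by omega)
  omega

end EnclosedDiagonals

section Rank

variable {k n : ℕ} (π : Equiv.Perm (Fin k)) (R : Set (Fin (k + 1) × Fin (k + 1)))
  (σ : Equiv.Perm (Fin n))

def UpperRightShaded (c : Fin k) : Prop :=
  SquareInMesh R ((c.val : ℤ) + 1) (((π c).val : ℤ) + 1)

open Classical in
noncomputable def occurrenceRank (f : Fin k → Fin n) : ℕᵒᵈ ×ₗ ℕ :=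
  toLex (OrderDual.toDual (∑ c with ¬ UpperRightShaded π R c, (σ (f c)).val),
    ∑ c with UpperRightShaded π R c, (σ (f c)).val)

variable {π R σ} {g g' : Fin k → Fin n}

lemma occurrenceRank_lt_of_shaded {c₀ : Fin k} (hc₀ : UpperRightShaded π R c₀)
    (hout : ∀ c, c ≠ c₀ → g' c = g c) (hlt : σ (g c₀) < σ (g' c₀)) :
    occurrenceRank π R σ g < occurrenceRank π R σ g' := by
  classical
  refine Prod.Lex.toLex_lt_toLex.2 (Or.inr ⟨?_, ?_⟩)
  · refine congrArg OrderDual.toDual (Finset.sum_congr rfl fun c hc => ?_)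
    rw [hout c (by rintro rfl; exact (Finset.mem_filter.1 hc).2 hc₀)]
  · refine Finset.sum_lt_sum (fun c _ => ?_)
      ⟨c₀, Finset.mem_filter.2 ⟨Finset.mem_univ _, hc₀⟩, hlt⟩
    rcases eq_or_ne c c₀ with rfl | hc
    · exact hlt.le
    · rw [hout c hc]

lemma occurrenceRank_lt_of_unshaded {c₀ : Fin k} (hc₀ : ¬ UpperRightShaded π R c₀)
    (hle : ∀ c, σ (g' c) ≤ σ (g c)) (hlt : σ (g' c₀) < σ (g c₀)) :
    occurrenceRank π R σ g < occurrenceRank π R σ g' := by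
  classical
  exact Prod.Lex.toLex_lt_toLex.2 (Or.inl (OrderDual.toDual_lt_toDual.2
    (Finset.sum_lt_sum (fun c _ => hle c)
      ⟨c₀, Finset.mem_filter.2 ⟨Finset.mem_univ _, hc₀⟩, hlt⟩)))

lemma exists_occurrenceRank_lt (hnd : ¬ HasEnclosedDiagonal π R) (hg : IsOccurrence π σ g)
    {p : Fin (k + 1) × Fin (k + 1)} (hp : p ∈ R) {z : Fin n}
    (hz : InRegion π σ g p.1.val p.2.val z) :
    ∃ g', IsOccurrence π σ g' ∧ occurrenceRank π R σ g < occurrenceRank π R σ g' := by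
  by_cases hpt : HasPoint π p.1.val p.2.val
  · obtain ⟨c₀, ha, hb⟩ := hpt
    refine ⟨_, hg.update_of_inRegion hz (c₀ := c₀) (by omega) (by omega),
      occurrenceRank_lt_of_shaded ⟨p, hp, by omega, by omega⟩
        (fun c hc => Function.update_of_ne hc _ _) ?_⟩
    rw [Function.update_self]
    exact hz.2.2.1 c₀ (by omega)
  · obtain ⟨m, hm, hpts, hsq⟩ := exists_diagonal_run hnd ⟨p, hp, rfl, rfl⟩ hpt
    obtain ⟨cₘ, ha, hb⟩ := hpts m hm le_rfl
    have hdiag := diagonal_of_hasPoint hpts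
    have hcₘ : cₘ.val ∈ Set.Ico p.1.val (p.1.val + m) :=
      Set.mem_Ico.2 ⟨by omega, by omega⟩
    refine ⟨_, isOccurrence_diagonalShift hg hz hdiag (mem_Ico_iff_of_diagonal hpts),
      occurrenceRank_lt_of_unshaded (c₀ := cₘ) ?_ (fun c => ?_)
        (diagonalShift_mem_box hg hz hdiag hcₘ).2.2.2⟩
    · rwa [UpperRightShaded, ha, hb]
    · by_cases hc : c.val ∈ Set.Ico p.1.val (p.1.val + m)
      · exact (diagonalShift_mem_box hg hz hdiag hc).2.2.2.le
      · rw [diagonalShift_of_notMem hc]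

end Rank

/-- If the mesh pattern `(π, R)` has no enclosed diagonal, then it is coincident with the
classical pattern `π`: a permutation contains `(π, R)` iff it contains `π`. -/
theorem no_enclosedDiagonal_superfluous {k : ℕ} (π : Equiv.Perm (Fin k))
    (R : Set (Fin (k + 1) × Fin (k + 1))) (hnd : ¬ HasEnclosedDiagonal π R) :
    ∀ (n : ℕ) (σ : Equiv.Perm (Fin n)), MeshContains π R σ ↔ PatternContains π σ := by
  intro n σ
  refine ⟨fun ⟨f, hmono, hval, _⟩ => ⟨f, hmono, hval⟩, fun ⟨f, hf⟩ => ?_⟩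
  obtain ⟨g, hg, hmax⟩ := Set.exists_max_image {f | IsOccurrence π σ f}
    (occurrenceRank π R σ) (Set.toFinite _) ⟨f, hf⟩
  refine ⟨g, hg.1, hg.2, fun p hp ⟨z, hz⟩ => ?_⟩
  obtain ⟨g', hg', hlt⟩ := exists_occurrenceRank_lt hnd hg hp hz
  exact (hmax g' hg').not_gt hlt
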